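/- Any mapping c that is an α-approximate core-set function for k-directional height is an α^{2k}-composable core-set for determinant maximization: for any collection P₁,...,P_m ⊂ ℝ^d, MAXDET_k(⋃ c(P_i)) ≥ MAXDET_k(⋃ P_i)/α^{2k}. -/

import Mathlib

abbrev Pt (d : ℕ) := EuclideanSpace ℝ (Fin d)

noncomputable def gramDet {d k : ℕ} (v : Fin k → Pt d) : ℝ :=
  Matrix.det (Matrix.of fun i j => (inner ℝ (v i) (v j) : ℝ))

noncomputable def maxdet {d : ℕ} (k : ℕ) (Q : Set (Pt d)) : ℝ :=
  sSup {x | ∃ S : Fin k → Pt d, Function.Injective S ∧ Set.range S ⊆ Q ∧ x = gramDet S}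

noncomputable def dirHeight {d : ℕ} (P : Set (Pt d)) (H : Submodule ℝ (Pt d)) : ℝ :=
  ⨆ p ∈ P, Metric.infDist p (H : Set (Pt d))

/-! The squared volume of a `k`-tuple is the squared volume of any `k - 1` of its points times the
squared distance from the remaining point to their span. That distance is a directional height
for a `(k - 1)`-dimensional subspace, so the core-set property lets one exchange a point of `P i`
for a point of `c (P i)` while losing at most a factor `α ^ 2` in the Gram determinant. Exchanging
the `k` points of any tuple from `⋃ i, P i` one at a time gives a tuple from `⋃ i, c (P i)`. -/

open Metric Matrix Function Set
open scoped InnerProductSpace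

section InnerProductSpace

variable {E : Type*} [NormedAddCommGroup E] [InnerProductSpace ℝ E]

theorem Submodule.infDist_eq_norm_sub_starProjection (U : Submodule ℝ E)
    [U.HasOrthogonalProjection] (w : E) : infDist w U = ‖w - U.starProjection w‖ := by
  rw [starProjection_minimal, infDist_eq_iInf]
  simp only [dist_eq_norm]
  rfl

theorem Matrix.det_updateRow_single_self {R : Type*} [CommRing R] {m : ℕ}
    (A : Matrix (Fin (m + 1)) (Fin (m + 1)) R) (j : Fin (m + 1)) :
    (A.updateRow j (Pi.single j 1)).det = (A.submatrix j.succAbove j.succAbove).det := by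
  rw [← adjugate_apply, adjugate_fin_succ_eq_det_submatrix, Even.neg_one_pow ⟨j, rfl⟩, one_mul]

theorem Matrix.gram_update_add_of_forall_inner_eq_zero {n : Type*} [DecidableEq n]
    (u : n → E) (j : n) {q : E} (hq : ∀ i, ⟪u i, q⟫_ℝ = 0) :
    gram ℝ (update u j (u j + q))
      = (gram ℝ u).updateRow j (gram ℝ u j + ‖q‖ ^ 2 • Pi.single j 1) := by
  have hq' : ∀ i, ⟪q, u i⟫_ℝ = 0 := fun i => real_inner_comm (u i) q ▸ hq i
  ext a b
  simp only [gram_apply, updateRow_apply, update_apply, Pi.add_apply, Pi.smul_apply,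
    Pi.single_apply, smul_eq_mul]
  split_ifs <;> simp_all [inner_add_left, inner_add_right, norm_add_sq_real]

theorem Matrix.det_gram_update_add_of_forall_inner_eq_zero {m : ℕ} (u : Fin (m + 1) → E)
    (j : Fin (m + 1)) {q : E} (hq : ∀ i, ⟪u i, q⟫_ℝ = 0) :
    (gram ℝ (update u j (u j + q))).det
      = (gram ℝ u).det + ‖q‖ ^ 2 * (gram ℝ (u ∘ j.succAbove)).det := by
  rw [gram_update_add_of_forall_inner_eq_zero u j hq, det_updateRow_add, updateRow_eq_self,
    det_updateRow_smul, det_updateRow_single_self]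
  rfl

theorem not_linearIndependent_update_of_mem_span {m : ℕ} (v : Fin (m + 1) → E)
    (j : Fin (m + 1)) {p : E} (hp : p ∈ Submodule.span ℝ (range (v ∘ j.succAbove))) :
    ¬ LinearIndependent ℝ (update v j p) := by
  intro h
  have hcomp : update v j p ∘ j.succAbove = v ∘ j.succAbove :=
    funext fun i => update_of_ne (Fin.succAbove_ne j i) _ _
  refine h.notMem_span_image (s := {j}ᶜ) (x := j) (by simp) ?_
  rwa [← Fin.range_succAbove, ← range_comp, hcomp, update_self]

theorem Matrix.det_gram_update {m : ℕ} (v : Fin (m + 1) → E) (j : Fin (m + 1)) (w : E) :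
    (gram ℝ (update v j w)).det
      = (gram ℝ (v ∘ j.succAbove)).det
        * infDist w (Submodule.span ℝ (range (v ∘ j.succAbove))) ^ 2 := by
  set V := Submodule.span ℝ (range (v ∘ j.succAbove))
  -- Write `w = p + q` with `p ∈ V` and `q ⊥ V`: putting `p` in slot `j` makes the Gram matrix
  -- singular, and `q` then only adds `‖q‖ ^ 2` to its `(j, j)` entry.
  have : FiniteDimensional ℝ V := FiniteDimensional.span_of_finite ℝ (finite_range _)
  set u := update v j (V.starProjection w)
  have hcomp : u ∘ j.succAbove = v ∘ j.succAbove :=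
    funext fun i => update_of_ne (Fin.succAbove_ne j i) _ _
  have huV : ∀ i, u i ∈ V := by
    intro i
    rcases eq_or_ne i j with rfl | hi
    · simp [u]
    · obtain ⟨l, rfl⟩ := Fin.exists_succAbove_eq hi
      exact Submodule.subset_span ⟨l, by simp [u]⟩
  have hq : ∀ i, ⟪u i, w - V.starProjection w⟫_ℝ = 0 := fun i =>
    V.inner_right_of_mem_orthogonal (huV i) (V.sub_starProjection_mem_orthogonal w)
  have hdep : (gram ℝ u).det = 0 := by
    by_contra h
    exact not_linearIndependent_update_of_mem_span v j (V.starProjection_apply_mem w)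
      (linearIndependent_of_det_gram_ne_zero h)
  have := det_gram_update_add_of_forall_inner_eq_zero u j hq
  rw [show u j = V.starProjection w from update_self .., add_sub_cancel, update_idem, hdep,
    hcomp] at this
  rw [this, V.infDist_eq_norm_sub_starProjection]
  ring

end InnerProductSpace

section Pt

variable {d : ℕ}

theorem gramDet_nonneg {k : ℕ} (v : Fin k → Pt d) : 0 ≤ gramDet v :=
  (posSemidef_gram ℝ v).det_nonneg

theorem linearIndependent_of_gramDet_pos {k : ℕ} {v : Fin k → Pt d} (h : 0 < gramDet v) :
    LinearIndependent ℝ v :=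
  linearIndependent_of_det_gram_ne_zero h.ne'

theorem gramDet_update {m : ℕ} (v : Fin (m + 1) → Pt d) (j : Fin (m + 1)) (w : Pt d) :
    gramDet (update v j w)
      = gramDet (v ∘ j.succAbove) * infDist w (Submodule.span ℝ (range (v ∘ j.succAbove))) ^ 2 :=
  det_gram_update v j w

theorem dirHeight_nonneg (P : Set (Pt d)) (H : Submodule ℝ (Pt d)) : 0 ≤ dirHeight P H :=
  Real.iSup_nonneg fun _ => Real.iSup_nonneg fun _ => infDist_nonneg

theorem dirHeight_le {P : Set (Pt d)} {H : Submodule ℝ (Pt d)} {M : ℝ} (hM : 0 ≤ M)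
    (h : ∀ p ∈ P, infDist p H ≤ M) : dirHeight P H ≤ M :=
  Real.iSup_le (fun p => Real.iSup_le (h p) hM) hM

theorem infDist_le_dirHeight {P : Set (Pt d)} (hP : P.Finite) {p : Pt d} (hp : p ∈ P)
    (H : Submodule ℝ (Pt d)) : infDist p H ≤ dirHeight P H := by
  obtain ⟨M, hM⟩ := (hP.image fun p => infDist p H).bddAbove
  have hbdd : BddAbove (range fun p => ⨆ _ : p ∈ P, infDist p (H : Set (Pt d))) :=
    ⟨max M 0, forall_mem_range.2 fun p =>
      Real.iSup_le (fun hp => (hM ⟨p, hp, rfl⟩).trans (le_max_left _ _)) (le_max_right _ _)⟩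
  exact (ciSup_pos hp).symm.le.trans (le_ciSup hbdd p)

theorem exists_mem_dirHeight_le_infDist {C : Set (Pt d)} (hC : C.Finite)
    {H : Submodule ℝ (Pt d)} (h : 0 < dirHeight C H) : ∃ q ∈ C, dirHeight C H ≤ infDist q H := by
  have hne : C.Nonempty := by
    by_contra hC
    rw [not_nonempty_iff_eq_empty.1 hC] at h
    exact h.not_ge (dirHeight_le le_rfl (by simp))
  obtain ⟨q, hq, hmax⟩ := exists_max_image C (fun p => infDist p (H : Set (Pt d))) hC hne
  exact ⟨q, hq, dirHeight_le infDist_nonneg hmax⟩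

theorem maxdet_nonneg (k : ℕ) (Q : Set (Pt d)) : 0 ≤ maxdet k Q :=
  Real.sSup_nonneg <| by
    rintro _ ⟨S, -, -, rfl⟩
    exact gramDet_nonneg S

theorem maxdet_le {k : ℕ} {Q : Set (Pt d)} {M : ℝ} (hM : 0 ≤ M)
    (h : ∀ S : Fin k → Pt d, range S ⊆ Q → gramDet S ≤ M) : maxdet k Q ≤ M :=
  Real.sSup_le (by rintro _ ⟨S, -, hS, rfl⟩; exact h S hS) hM

theorem gramDet_le_maxdet {k : ℕ} {Q : Set (Pt d)} (hQ : Q.Finite) {S : Fin k → Pt d}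
    (hS : range S ⊆ Q) : gramDet S ≤ maxdet k Q := by
  rcases le_or_gt (gramDet S) 0 with h | h
  · exact h.trans (maxdet_nonneg k Q)
  have hbdd : BddAbove {x | ∃ S : Fin k → Pt d, Injective S ∧ range S ⊆ Q ∧ x = gramDet S} := by
    refine ((Set.Finite.pi' fun _ : Fin k => hQ).image gramDet).bddAbove.mono ?_
    rintro _ ⟨S, -, hS, rfl⟩
    exact ⟨S, fun i => hS ⟨i, rfl⟩, rfl⟩
  exact le_csSup hbdd ⟨S, (linearIndependent_of_gramDet_pos h).injective, hS, rfl⟩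

theorem exists_mem_gramDet_le_update {k : ℕ} {α : ℝ} {P C : Set (Pt d)} (hP : P.Finite)
    (hCP : C ⊆ P) (hcore : ∀ H : Submodule ℝ (Pt d), Module.finrank ℝ H = k - 1 →
      dirHeight P H ≤ α * dirHeight C H)
    {S : Fin k → Pt d} (hS : 0 < gramDet S) {j : Fin k} (hj : S j ∈ P) :
    ∃ q ∈ C, gramDet S ≤ α ^ 2 * gramDet (update S j q) := by
  obtain ⟨m, rfl⟩ := Nat.exists_eq_add_one_of_ne_zero j.pos.ne'
  set V := Submodule.span ℝ (range (S ∘ j.succAbove))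
  have hSj : gramDet S = gramDet (S ∘ j.succAbove) * infDist (S j) V ^ 2 := by
    simpa using gramDet_update S j (S j)
  have hrank : Module.finrank ℝ V = m + 1 - 1 := by
    rw [finrank_span_eq_card ((linearIndependent_of_gramDet_pos hS).comp _
      j.succAbove_right_injective)]
    simp
  have hpos : 0 < infDist (S j) V := by
    refine infDist_nonneg.lt_of_ne' fun h => hS.ne' ?_
    rw [hSj, h]
    ring
  have hheight : infDist (S j) V ≤ α * dirHeight C V :=
    (infDist_le_dirHeight hP hj V).trans (hcore V hrank)
  obtain ⟨hα, hCV⟩ := (pos_and_pos_or_neg_and_neg_of_mul_pos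
    (hpos.trans_le hheight)).resolve_right fun h => (dirHeight_nonneg C V).not_gt h.2
  obtain ⟨q, hqC, hq⟩ := exists_mem_dirHeight_le_infDist (hP.subset hCP) hCV
  refine ⟨q, hqC, ?_⟩
  calc gramDet S = gramDet (S ∘ j.succAbove) * infDist (S j) V ^ 2 := hSj
    _ ≤ gramDet (S ∘ j.succAbove) * (α * infDist q V) ^ 2 := by
      gcongr
      · exact gramDet_nonneg _
      · exact hheight.trans (by gcongr)
    _ = α ^ 2 * gramDet (update S j q) := by
      rw [gramDet_update]
      ring

theorem gramDet_le_pow_mul_maxdet {k : ℕ} {α : ℝ} {U C : Set (Pt d)} (hC : C.Finite)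
    (hCU : C ⊆ U) (hswap : ∀ S : Fin k → Pt d, 0 < gramDet S → ∀ j, S j ∈ U →
      ∃ q ∈ C, gramDet S ≤ α ^ 2 * gramDet (update S j q))
    (s : Finset (Fin k)) (S : Fin k → Pt d) (hSU : ∀ i, S i ∈ U) (hSC : ∀ i ∉ s, S i ∈ C) :
    gramDet S ≤ α ^ (2 * s.card) * maxdet k C := by
  induction s using Finset.induction_on generalizing S with
  | empty =>
    simpa using gramDet_le_maxdet hC (range_subset_iff.2 fun i => hSC i (Finset.notMem_empty i))
  | insert j s hj ih =>
    rcases le_or_gt (gramDet S) 0 with h | h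
    · exact h.trans (mul_nonneg ((even_two_mul _).pow_nonneg α) (maxdet_nonneg k C))
    obtain ⟨q, hqC, hq⟩ := hswap S h j (hSU j)
    have hU : ∀ i, update S j q i ∈ U := (forall_update_iff S fun _ x => x ∈ U).2
      ⟨hCU hqC, fun i _ => hSU i⟩
    have hC' : ∀ i ∉ s, update S j q i ∈ C := (forall_update_iff S fun i x => i ∉ s → x ∈ C).2
      ⟨fun _ => hqC, fun i hij his => hSC i (by simp [hij, his])⟩
    calc gramDet S ≤ α ^ 2 * gramDet (update S j q) := hq
      _ ≤ α ^ 2 * (α ^ (2 * s.card) * maxdet k C) := by gcongr; exact ih _ hU hC'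
      _ = α ^ (2 * (insert j s).card) * maxdet k C := by
        rw [Finset.card_insert_of_notMem hj]
        ring

end Pt

theorem dirHeight_coreset_composable_general {d k : ℕ} (α : ℝ)
    (c : Set (Pt d) → Set (Pt d))
    (hsub : ∀ P : Set (Pt d), P.Finite → c P ⊆ P)
    (hcore : ∀ P : Set (Pt d), P.Finite →
      ∀ H : Submodule ℝ (Pt d), Module.finrank ℝ H = k - 1 →
        dirHeight P H ≤ α * dirHeight (c P) H)
    {m : ℕ} (P : Fin m → Set (Pt d)) (hfin : ∀ i, (P i).Finite) :
    maxdet k (⋃ i, P i) ≤ α ^ (2 * k) * maxdet k (⋃ i, c (P i)) := by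
  have hcP : ∀ i, c (P i) ⊆ P i := fun i => hsub _ (hfin i)
  have hswap : ∀ S : Fin k → Pt d, 0 < gramDet S → ∀ j, S j ∈ ⋃ i, P i →
      ∃ q ∈ ⋃ i, c (P i), gramDet S ≤ α ^ 2 * gramDet (update S j q) := by
    intro S hS j hj
    obtain ⟨i, hi⟩ := mem_iUnion.1 hj
    obtain ⟨q, hq, hSq⟩ := exists_mem_gramDet_le_update (hfin i) (hcP i) (hcore _ (hfin i)) hS hi
    exact ⟨q, mem_iUnion.2 ⟨i, hq⟩, hSq⟩
  refine maxdet_le (mul_nonneg ((even_two_mul k).pow_nonneg α) (maxdet_nonneg k _)) fun S hS => ?_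
  simpa using gramDet_le_pow_mul_maxdet (finite_iUnion fun i => (hfin i).subset (hcP i))
    (iUnion_mono hcP) hswap Finset.univ S (range_subset_iff.1 hS) (by simp)

/-- Any mapping `c` that is an `α`-approximate core-set function for the
`k`-directional height is an `α^{2k}`-composable core-set for determinant
maximization. -/
theorem dirHeight_coreset_composable {d k : ℕ} (hk : 1 ≤ k) (α : ℝ) (hα : 1 ≤ α)
    (c : Set (Pt d) → Set (Pt d))
    (hsub : ∀ P : Set (Pt d), P.Finite → c P ⊆ P)
    (hcore : ∀ P : Set (Pt d), P.Finite →
      ∀ H : Submodule ℝ (Pt d), Module.finrank ℝ H = k - 1 →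
        dirHeight P H ≤ α * dirHeight (c P) H)
    {m : ℕ} (P : Fin m → Set (Pt d)) (hfin : ∀ i, (P i).Finite) :
    maxdet k (⋃ i, P i) ≤ α ^ (2 * k) * maxdet k (⋃ i, c (P i)) :=
  dirHeight_coreset_composable_general α c hsub hcore P hfin
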